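/- arXiv:2108.00823 — 2 statements merged into one kernel-verified Lean document; each statement's English description precedes it below -/
import Mathlib

section
/- Let G be a finite group and H a normal subgroup of G. Then d(G) ≥ d(H) + d(G/H), where d(K) denotes the small Davenport constant of a finite group K, i.e., the maximal length of a sequence over K admitting no nonempty subsequence whose terms can be ordered so that their product is the identity. -/
/-- A multiset `S` over a group is a *product-one sequence* if its terms can be
ordered so that their product is the identity. -/
def IsProductOne {G : Type*} [Group G] (S : Multiset G) : Prop :=
  ∃ l : List G, (l : Multiset G) = S ∧ l.prod = 1

/-- A multiset is *product-one free* if no nonempty sub-multiset is product-one. -/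
def ProductOneFree {G : Type*} [Group G] (S : Multiset G) : Prop :=
  ∀ T : Multiset G, T ≤ S → T ≠ 0 → ¬ IsProductOne T

/-- The small Davenport constant `d(G)`. -/
noncomputable def smallDavenport (G : Type*) [Group G] : ℕ :=
  sSup {k : ℕ | ∃ S : Multiset G, Multiset.card S = k ∧ ProductOneFree S}

/-!
Take maximal product-one free sequences `S` over `H` and `T` over `G ⧸ H`, and lift `T` to `G` by
choosing a representative of each term. In a product-one subsequence of `S + lift T`, the terms
outside `H` map, after dropping the ones, to a product-one subsequence of `T`; so there are none,
and the subsequence lies in `S`.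
-/

open Function

section Group

variable {G K : Type*} [Group G] [Group K]

theorem IsProductOne.map {F : Type*} [FunLike F G K] [MonoidHomClass F G K] (f : F)
    {V : Multiset G} (hV : IsProductOne V) : IsProductOne (V.map f) := by
  obtain ⟨l, rfl, hl⟩ := hV
  exact ⟨l.map f, rfl, by rw [← map_list_prod, hl, map_one]⟩

theorem isProductOne_map_iff {F : Type*} [FunLike F G K] [MonoidHomClass F G K] {f : F}
    (hf : Injective f) {V : Multiset G} : IsProductOne (V.map f) ↔ IsProductOne V := by
  refine ⟨fun ⟨l, hl, hprod⟩ => ?_, IsProductOne.map f⟩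
  have hl_map : (l.map (invFun f)).map f = l := by
    rw [List.map_map]
    refine (List.map_congr_left fun x hx => ?_).trans l.map_id'
    have hx : x ∈ V.map f := by rw [← hl]; exact hx
    obtain ⟨a, -, rfl⟩ := Multiset.mem_map.mp hx
    exact congrArg f (leftInverse_invFun hf a)
  refine ⟨l.map (invFun f), ?_, hf ?_⟩
  · rw [← Multiset.map_coe, hl, Multiset.map_map, (leftInverse_invFun hf).comp_eq_id,
      Multiset.map_id]
  · rw [map_list_prod, hl_map, hprod, map_one]

theorem IsProductOne.filter_ne_one [DecidableEq G] {V : Multiset G} (hV : IsProductOne V) :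
    IsProductOne (V.filter (· ≠ 1)) := by
  obtain ⟨l, rfl, hl⟩ := hV
  refine ⟨l.filter (· != 1), ?_, by rw [List.prod_filter_bne_one, hl]⟩
  simp only [Multiset.filter_coe, bne, beq_eq_decide, decide_not]

theorem ProductOneFree.one_notMem {S : Multiset G} (hS : ProductOneFree S) : (1 : G) ∉ S :=
  fun h => hS {1} (Multiset.singleton_le.mpr h) (by simp) ⟨[1], rfl, List.prod_singleton⟩

theorem ProductOneFree.map_of_injective {F : Type*} [FunLike F G K] [MonoidHomClass F G K]
    {f : F} (hf : Injective f) {S : Multiset G} (hS : ProductOneFree S) :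
    ProductOneFree (S.map f) := by
  intro T hT hT0 hTone
  have hT_map : (T.map (invFun f)).map f = T := by
    rw [Multiset.map_map]
    refine (Multiset.map_congr rfl fun x hx => ?_).trans T.map_id'
    obtain ⟨a, -, rfl⟩ := Multiset.mem_map.mp (Multiset.mem_of_le hT hx)
    exact congrArg f (leftInverse_invFun hf a)
  have hle : T.map (invFun f) ≤ S := by
    have := Multiset.map_le_map (f := invFun f) hT
    rwa [Multiset.map_map, (leftInverse_invFun hf).comp_eq_id, Multiset.map_id] at this
  rw [← hT_map, isProductOne_map_iff hf] at hTone
  exact hS _ hle (by simpa using hT0) hTone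

theorem ProductOneFree.add_of_map_eq_one {φ : G →* K} {A B : Multiset G}
    (hA : ProductOneFree A) (hAker : ∀ a ∈ A, φ a = 1) (hB : ProductOneFree (B.map φ)) :
    ProductOneFree (A + B) := by
  classical
  intro V hV hV0 hVone
  have hBker : ∀ b ∈ B, φ b ≠ 1 := fun b hb h =>
    hB.one_notMem (h ▸ Multiset.mem_map_of_mem φ hb)
  have hVB : V.filter (φ · ≠ 1) ≤ B := calc
    _ ≤ (A + B).filter (φ · ≠ 1) := Multiset.filter_le_filter _ hV
    _ = B := by
      rw [Multiset.filter_add, Multiset.filter_eq_nil.mpr (fun a ha h => h (hAker a ha)),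
        Multiset.filter_eq_self.mpr hBker, zero_add]
  have hVB0 : V.filter (φ · ≠ 1) = 0 := by
    by_contra h
    refine hB _ (Multiset.map_le_map hVB) (by simpa using h) ?_
    simpa [Multiset.filter_map] using (hVone.map φ).filter_ne_one
  have hVA : V ≤ A := calc
    V = V.filter (φ · = 1) := (Multiset.filter_eq_self.mpr (by simpa using hVB0)).symm
    _ ≤ (A + B).filter (φ · = 1) := Multiset.filter_le_filter _ hV
    _ = A := by
      rw [Multiset.filter_add, Multiset.filter_eq_self.mpr hAker,
        Multiset.filter_eq_nil.mpr hBker, add_zero]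
  exact hA V hVA hV0 hVone

/-- Pigeonhole on the prefix products: two equal ones would enclose a product-one block. -/
theorem ProductOneFree.card_lt_natCard [Finite G] {S : Multiset G} (hS : ProductOneFree S) :
    Multiset.card S < Nat.card G := by
  obtain ⟨l, rfl⟩ := Quot.exists_rep S
  change l.length < Nat.card G
  have hinj : Injective fun i : Fin (l.length + 1) => (l.take i).prod := by
    suffices ∀ i j : ℕ, i < j → j ≤ l.length → (l.take i).prod ≠ (l.take j).prod by
      intro i j hij
      rcases lt_trichotomy (i : ℕ) j with h | h | h
      · exact absurd hij (this i j h (by omega))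
      · exact Fin.ext h
      · exact absurd hij.symm (this j i h (by omega))
    intro i j hij hj heq
    have hblock : ((l.take j).drop i).prod = 1 := by
      simpa [List.take_take, Nat.min_eq_left hij.le, ← heq] using
        List.prod_take_mul_prod_drop (l.take j) i
    refine hS _ ?_ ?_ ⟨_, rfl, hblock⟩
    · exact Multiset.coe_le.mpr ((List.drop_sublist _ _).trans (List.take_sublist _ _)).subperm
    · simp only [ne_eq, Multiset.coe_eq_zero, List.drop_eq_nil_iff, List.length_take]
      omega
  simpa using Nat.card_le_card_of_injective _ hinj

end Group

section Davenport

variable {G : Type*} [Group G] [Finite G]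

theorem bddAbove_card_productOneFree :
    BddAbove {k : ℕ | ∃ S : Multiset G, Multiset.card S = k ∧ ProductOneFree S} :=
  ⟨Nat.card G, fun _ ⟨_, hk, hS⟩ => hk ▸ hS.card_lt_natCard.le⟩

theorem ProductOneFree.card_le_smallDavenport {S : Multiset G} (hS : ProductOneFree S) :
    Multiset.card S ≤ smallDavenport G :=
  le_csSup bddAbove_card_productOneFree ⟨S, rfl, hS⟩

theorem exists_productOneFree_card_eq_smallDavenport :
    ∃ S : Multiset G, Multiset.card S = smallDavenport G ∧ ProductOneFree S :=
  Nat.sSup_mem (s := {k | ∃ S : Multiset G, Multiset.card S = k ∧ ProductOneFree S})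
    ⟨0, 0, rfl, fun _ hT hT0 _ => hT0 (Multiset.le_zero.mp hT)⟩ bddAbove_card_productOneFree

end Davenport

theorem stmt_0 (G : Type*) [Group G] [Finite G] (H : Subgroup G) [H.Normal] :
    smallDavenport H + smallDavenport (G ⧸ H) ≤ smallDavenport G := by
  obtain ⟨S, hS_card, hS⟩ := exists_productOneFree_card_eq_smallDavenport (G := H)
  obtain ⟨T, hT_card, hT⟩ := exists_productOneFree_card_eq_smallDavenport (G := G ⧸ H)
  have hT_lift : (T.map Quotient.out).map (QuotientGroup.mk' H) = T := by
    simp [Multiset.map_map]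
  have hfree : ProductOneFree (S.map H.subtype + T.map Quotient.out) :=
    (hS.map_of_injective H.subtype_injective).add_of_map_eq_one (φ := QuotientGroup.mk' H)
      (fun a ha => by obtain ⟨h, -, rfl⟩ := Multiset.mem_map.mp ha; simp) (by rwa [hT_lift])
  simpa [hS_card, hT_card] using hfree.card_le_smallDavenport
end

section
/- Let m ≥ 2 and n ≥ 4 be integers with m dividing n and n even. Then η(D_{2n} × C_m) ≥ 2m + n − 1. -/
/-- The `η`-constant of `G`. -/
noncomputable def etaConst (G : Type*) [Group G] : ℕ :=
  sInf {l : ℕ | ∀ S : Multiset G, l ≤ Multiset.card S →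
    ∃ T, T ≤ S ∧ 1 ≤ Multiset.card T ∧ Multiset.card T ≤ Monoid.exponent G ∧ IsProductOne T}
/-!
Write `r` for the rotation by one step, `s` for a reflection and `e` for a generator of `C_m`.
The sequence `r^[n-1] e^[m-1] (re)^[m-1] s` has length `n + 2m - 2` and no product-one
subsequence of length at most `n = exp(G)`. The sign homomorphism `D_{2n} → C_2` excludes `s`
from such a subsequence; what remains lives in the abelian subgroup `C_n × C_m`, where `x` copies
of `r`, `y` of `e` and `z` of `re` multiply to one iff `n ∣ x + z` and `m ∣ y + z`, and the
bounds on `x, y, z` force `x + y + z > n`. A finite group has a finite `η`-constant (pigeonhole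
gives `orderOf g` equal terms), so every such sequence is shorter than `η(G)`.
-/

open DihedralGroup Multiplicative

namespace Multiset

variable {α β : Type*}

theorem exists_eq_add_of_le_add {s t u : Multiset α} (h : s ≤ t + u) :
    ∃ t' ≤ t, ∃ u' ≤ u, s = t' + u' := by
  classical
  exact ⟨s ∩ t, inter_le_right, s - t, tsub_le_iff_left.2 h, by rw [add_comm, sub_add_inter]⟩

theorem exists_eq_replicate_add_of_le_replicate_add {s u : Multiset α} {a : α} {k : ℕ}
    (h : s ≤ replicate k a + u) : ∃ j ≤ k, ∃ u' ≤ u, s = replicate j a + u' := by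
  obtain ⟨t', ht', u', hu', rfl⟩ := exists_eq_add_of_le_add h
  obtain ⟨j, hj, rfl⟩ := le_replicate_iff.1 ht'
  exact ⟨j, hj, u', hu', rfl⟩

theorem exists_le_eq_map_of_le_map {f : α → β} {s : Multiset α} {t : Multiset β}
    (h : t ≤ s.map f) : ∃ s' ≤ s, t = s'.map f := by
  classical
  induction s using Multiset.induction_on generalizing t with
  | empty => exact ⟨0, le_rfl, le_zero.1 (by simpa using h)⟩
  | cons a s ih =>
    rw [map_cons] at h
    by_cases ha : f a ∈ t
    · obtain ⟨s', hs', hts'⟩ := ih (by simpa using erase_le_erase (f a) h)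
      refine ⟨a ::ₘ s', cons_le_cons a hs', ?_⟩
      rw [map_cons, ← hts', cons_erase ha]
    · obtain ⟨s', hs', rfl⟩ := ih ((le_cons_of_notMem ha).1 h)
      exact ⟨s', hs'.trans (le_cons_self s a), rfl⟩

theorem exists_le_count_of_card_mul_le [Fintype α] [Nonempty α] [DecidableEq α]
    {s : Multiset α} {k : ℕ} (h : Fintype.card α * k ≤ card s) : ∃ a, k ≤ s.count a := by
  obtain ⟨a, -, ha⟩ := Finset.exists_le_of_sum_le (f := fun _ ↦ k) (g := (s.count ·))
    Finset.univ_nonempty (by simpa [sum_count_eq_card] using h)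
  exact ⟨a, ha⟩

end Multiset

open Multiset

section ProductOne

variable {G : Type*} [Group G]

theorem IsProductOne.prod_map_eq_one {H : Type*} [CommMonoid H] (f : G →* H)
    {T : Multiset G} (h : IsProductOne T) : (T.map f).prod = 1 := by
  obtain ⟨l, rfl, hl⟩ := h
  rw [map_coe, prod_coe, ← map_list_prod, hl, map_one]

theorem IsProductOne.prod_eq_one_of_map {A : Type*} [CommGroup A] {ψ : A →* G}
    (hψ : Function.Injective ψ) {T : Multiset A} (h : IsProductOne (T.map ψ)) : T.prod = 1 := by
  obtain ⟨l, hl, hprod⟩ := h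
  induction T using Quotient.inductionOn with
  | h l' =>
    have hperm : (l'.map ψ).Perm l := Multiset.coe_eq_coe.1 (by simpa using hl.symm)
    have hcomm : (l'.map ψ).Pairwise Commute :=
      (List.pairwise_of_forall (R := Commute) fun a b ↦ Commute.all a b).map ψ
        fun _ _ h ↦ h.map ψ
    rw [← map_eq_one_iff ψ hψ, quot_mk_to_coe, prod_coe, map_list_prod, hperm.prod_eq' hcomm,
      hprod]

theorem isProductOne_replicate_orderOf (g : G) : IsProductOne (replicate (orderOf g) g) :=
  ⟨List.replicate (orderOf g) g, coe_replicate _ _,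
    by rw [List.prod_replicate, pow_orderOf_eq_one]⟩

theorem exists_isProductOne_of_card_mul_exponent_le [Finite G] {S : Multiset G}
    (h : Nat.card G * Monoid.exponent G ≤ card S) :
    ∃ T ≤ S, 1 ≤ card T ∧ card T ≤ Monoid.exponent G ∧ IsProductOne T := by
  classical
  have := Fintype.ofFinite G
  obtain ⟨g, hg⟩ :=
    exists_le_count_of_card_mul_le (s := S) (by rwa [← Nat.card_eq_fintype_card])
  have hord := Monoid.orderOf_le_exponent Monoid.ExponentExists.of_finite g
  refine ⟨replicate (orderOf g) g, le_count_iff_replicate_le.1 (hord.trans hg), ?_, ?_,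
    isProductOne_replicate_orderOf g⟩
  · rw [card_replicate]; exact orderOf_pos g
  · rwa [card_replicate]

theorem card_lt_etaConst [Finite G] {S : Multiset G}
    (hS : ∀ T ≤ S, T ≠ 0 → card T ≤ Monoid.exponent G → ¬ IsProductOne T) :
    card S < etaConst G := by
  by_contra! h
  obtain ⟨T, hTS, hT, hTexp, hTone⟩ :=
    Nat.sInf_mem (s := {l | ∀ S : Multiset G, l ≤ card S → ∃ T ≤ S, 1 ≤ card T ∧
      card T ≤ Monoid.exponent G ∧ IsProductOne T})
      ⟨_, fun _ ↦ exists_isProductOne_of_card_mul_exponent_le⟩ S h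
  exact hS T hTS (card_pos.1 hT) hTexp hTone

end ProductOne

namespace DihedralGroup

variable {n : ℕ}

def rotationHom : Multiplicative (ZMod n) →* DihedralGroup n where
  toFun i := r (toAdd i)
  map_one' := rfl
  map_mul' _ _ := (r_mul_r _ _).symm

theorem rotationHom_injective : Function.Injective (rotationHom (n := n)) :=
  fun _ _ h ↦ toAdd.injective (r.inj h)

def sign : DihedralGroup n →* Multiplicative (ZMod 2) where
  toFun
    | r _ => 1
    | sr _ => ofAdd 1
  map_one' := rfl
  map_mul' := by
    rintro (a | a) (b | b) <;> simp only [r_mul_r, r_mul_sr, sr_mul_r, sr_mul_sr] <;> rfl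

@[simp]
theorem sign_rotationHom (i : Multiplicative (ZMod n)) : sign (rotationHom i) = 1 := rfl

@[simp]
theorem sign_sr (i : ZMod n) : sign (sr i) = ofAdd 1 := rfl

theorem exponent_prod_multiplicative_zmod {m : ℕ} (hev : Even n) (hdvd : m ∣ n) :
    Monoid.exponent (DihedralGroup n × Multiplicative (ZMod m)) = n := by
  rw [Monoid.exponent_prod, DihedralGroup.exponent, Monoid.exponent_multiplicative,
    IsAddCyclic.exponent_eq_card, Nat.card_zmod, lcm_eq_nat_lcm, lcm_eq_nat_lcm,
    Nat.lcm_eq_left_iff_dvd.2 hev.two_dvd, Nat.lcm_eq_left_iff_dvd.2 hdvd]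

end DihedralGroup

theorem Nat.lt_add_add_of_dvd_add_of_dvd_add {n m x y z : ℕ} (hmn : m ≤ n) (hx : x < n)
    (hy : y < m) (hz : z < m) (hxz : n ∣ x + z) (hyz : m ∣ y + z) (hpos : x + y + z ≠ 0) :
    n < x + y + z := by
  have key {d a : ℕ} (hd : d ∣ a) (ha : a < 2 * d) : a = 0 ∨ a = d :=
    (eq_or_ne a 0).imp_right (Nat.eq_of_dvd_of_lt_two_mul · hd ha)
  rcases key hxz (by omega) with h₁ | h₁ <;> rcases key hyz (by omega) with h₂ | h₂ <;>
    omega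

section Extremal

variable {n m : ℕ}

def rotationSeq (n m : ℕ) : Multiset (Multiplicative (ZMod n) × Multiplicative (ZMod m)) :=
  replicate (n - 1) (ofAdd 1, 1) + (replicate (m - 1) (1, ofAdd 1) +
    replicate (m - 1) (ofAdd 1, ofAdd 1))

-- `r^[n-1] e^[m-1] (re)^[m-1] s`; `rotationSeq` records `r^i e^j` as `(ofAdd i, ofAdd j)`
def extremalSeq (n m : ℕ) : Multiset (DihedralGroup n × Multiplicative (ZMod m)) :=
  (sr 0, 1) ::ₘ (rotationSeq n m).map (rotationHom.prodMap (MonoidHom.id _))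

theorem card_extremalSeq : card (extremalSeq n m) = n - 1 + (m - 1 + (m - 1)) + 1 := by
  simp [extremalSeq, rotationSeq]

theorem lt_card_of_le_rotationSeq (hn : 0 < n) (hdvd : m ∣ n)
    {T : Multiset (Multiplicative (ZMod n) × Multiplicative (ZMod m))}
    (hT : T ≤ rotationSeq n m) (hT0 : T ≠ 0) (hprod : T.prod = 1) : n < card T := by
  obtain ⟨x, hx, T₁, hT₁, rfl⟩ := exists_eq_replicate_add_of_le_replicate_add hT
  obtain ⟨y, hy, T₂, hT₂, rfl⟩ := exists_eq_replicate_add_of_le_replicate_add hT₁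
  obtain ⟨z, hz, rfl⟩ := le_replicate_iff.1 hT₂
  have hm : 0 < m := Nat.pos_of_dvd_of_pos hdvd hn
  simp only [prod_add, prod_replicate, Prod.pow_mk, Prod.mk_mul_mk, one_pow, one_mul,
    ← ofAdd_nsmul, ← ofAdd_add, nsmul_one, ← Nat.cast_add, Prod.mk_eq_one, ofAdd_eq_one,
    ZMod.natCast_eq_zero_iff] at hprod
  have hpos := card_pos.2 hT0
  simp only [card_add, card_replicate, ← add_assoc] at hpos ⊢
  exact Nat.lt_add_add_of_dvd_add_of_dvd_add (Nat.le_of_dvd hn hdvd) (by omega) (by omega)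
    (by omega) hprod.1 hprod.2 (by omega)

theorem not_isProductOne_of_le_extremalSeq (hn : 0 < n) (hdvd : m ∣ n)
    {T : Multiset (DihedralGroup n × Multiplicative (ZMod m))}
    (hT : T ≤ extremalSeq n m) (hT0 : T ≠ 0) (hcard : card T ≤ n) : ¬ IsProductOne T := by
  classical
  intro hone
  -- `s` is the only term of `extremalSeq` with nontrivial sign
  have hσ : (sr 0, 1) ∉ T := by
    intro hσ
    obtain ⟨T', -, hT'⟩ := exists_le_eq_map_of_le_map
      (by simpa [extremalSeq] using erase_le_erase (sr 0, 1) hT)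
    have := hone.prod_map_eq_one (sign.comp (MonoidHom.fst _ _))
    rw [← cons_erase hσ, hT', map_cons, map_map, prod_cons] at this
    simp [Function.comp_def] at this
  obtain ⟨T', hT', rfl⟩ := exists_le_eq_map_of_le_map ((le_cons_of_notMem hσ).1 hT)
  exact (lt_card_of_le_rotationSeq hn hdvd hT' (by simpa using hT0)
    (hone.prod_eq_one_of_map (rotationHom_injective.prodMap Function.injective_id))).not_ge
    (by simpa using hcard)

end Extremal

theorem stmt_5 (m n : ℕ) (hm : 2 ≤ m) (hn : 4 ≤ n) (hdvd : m ∣ n) (hev : Even n) :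
    2 * m + n - 1 ≤ etaConst (DihedralGroup n × Multiplicative (ZMod m)) := by
  have : NeZero n := ⟨by omega⟩
  have : NeZero m := ⟨by omega⟩
  have hlt := card_lt_etaConst fun T hT hT0 hcard ↦
    not_isProductOne_of_le_extremalSeq (by omega) hdvd hT hT0
      (hcard.trans (exponent_prod_multiplicative_zmod hev hdvd).le)
  rw [card_extremalSeq] at hlt
  omega
end
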